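/- arXiv:1801.05376 — 2 statements merged into one kernel-verified Lean document; each statement's English description precedes it below -/
import Mathlib

section
/- For every overlap-free infinite binary word u, every u-special factor of u is a factor of the Thue–Morse word t. -/
/-- The factor of the infinite word `u` of length `m` starting at position `i`. -/
def factorAt {k : ℕ} (u : ℕ → Fin k) (i m : ℕ) : List (Fin k) :=
  (List.range m).map fun j => u (i + j)

/-- `v` is a factor of the infinite word `u`. -/
def IsFactor {k : ℕ} (v : List (Fin k)) (u : ℕ → Fin k) : Prop :=
  ∃ i, v = factorAt u i v.length

/-- Subword complexity: the number of distinct factors of length `n`. -/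
noncomputable def complexity {k : ℕ} (u : ℕ → Fin k) (n : ℕ) : ℕ :=
  Set.ncard {v : List (Fin k) | v.length = n ∧ IsFactor v u}

/-- The word `w` has period `q` (`1 ≤ q ≤ |w|`, and `w(i) = w(i+q)` whenever defined). -/
def HasPer {A : Type*} (w : List A) (q : ℕ) : Prop :=
  1 ≤ q ∧ q ≤ w.length ∧ ∀ i, i + q < w.length → w[i]? = w[i + q]?

/-- The minimal period of a finite word. -/
noncomputable def minPer {A : Type*} (w : List A) : ℕ := sInf {q | HasPer w q}

/-- The exponent of a finite word: its length divided by its minimal period. -/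
noncomputable def exponent {A : Type*} (w : List A) : ℝ := (w.length : ℝ) / (minPer w : ℝ)

/-- `u` is `α`-power-free: no nonempty factor has exponent `≥ α`. -/
def PowerFree {k : ℕ} (α : ℝ) (u : ℕ → Fin k) : Prop :=
  ∀ v : List (Fin k), v ≠ [] → IsFactor v u → exponent v < α

/-- `u` is `α⁺`-power-free: no nonempty factor has exponent `> α`. -/
def PowerFreePlus {k : ℕ} (α : ℝ) (u : ℕ → Fin k) : Prop :=
  ∀ v : List (Fin k), v ≠ [] → IsFactor v u → exponent v ≤ α

/-- Overlap-free means `2⁺`-power-free. -/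
def OverlapFree {k : ℕ} (u : ℕ → Fin k) : Prop := PowerFreePlus 2 u

open Fin.NatCast in
/-- The Thue–Morse word: `t n` is the number of 1's, mod 2, in the binary expansion of `n`. -/
def thueMorse : ℕ → Fin 2 := fun n => ((Nat.digits 2 n).count 1 : Fin 2)

/-!
In an overlap-free binary word all squares `aa` at positions `≥ 1` start at positions of the same
parity, so from some position `r ≤ 2` on the word is `μ` of a word that is again overlap-free.
A special factor with a square strictly inside is therefore aligned with these `μ`-blocks, and
desubstituting it yields a special factor of about half the length in the preimage; since
`t = μ(t)`, the Thue–Morse occurrence found for the shorter word lifts back. Special factors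
without an inner square have length at most 5 and are checked exhaustively. When one occurrence
starts inside the prefix of length `r`, the desubstituted factor is a special prefix of the
preimage, which is why special prefixes, together with the letter preceding their other
occurrence, are handled in the same induction.
-/

theorem fin_two_eq_add_one_of_ne : ∀ {a b : Fin 2}, a ≠ b → b = a + 1 := by decide

theorem fin_two_eq_of_ne_of_ne : ∀ {a b c : Fin 2}, a ≠ b → b ≠ c → a = c := by decide

theorem isFactor_iff {k : ℕ} {v : List (Fin k)} {u : ℕ → Fin k} :
    IsFactor v u ↔ ∃ i, ∀ m (hm : m < v.length), v[m] = u (i + m) := by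
  simp [IsFactor, factorAt, List.ext_getElem_iff]

def NoOverlap {α : Type*} (u : ℕ → α) : Prop :=
  ∀ i q, 0 < q → ∃ j ≤ q, u (i + j) ≠ u (i + j + q)

theorem OverlapFree.noOverlap {k : ℕ} {u : ℕ → Fin k} (hu : OverlapFree u) : NoOverlap u := by
  intro i q hq
  by_contra! h
  set w := factorAt u i (2 * q + 1)
  have hw : w.length = 2 * q + 1 := by simp [w, factorAt]
  have hper : HasPer w q := by
    refine ⟨hq, by omega, fun m hm => ?_⟩
    simp only [w, factorAt, List.getElem?_map, List.getElem?_range (by omega : m < 2 * q + 1),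
      List.getElem?_range (by omega : m + q < 2 * q + 1), Option.map_some, ← add_assoc]
    rw [h m (by omega)]
  have hpos : 0 < minPer w := (Nat.sInf_mem (s := {q | HasPer w q}) ⟨q, hper⟩).1
  have hle : minPer w ≤ q := Nat.sInf_le hper
  have hexp := hu w (by simp [← List.length_pos_iff, hw]) ⟨i, by rw [hw]⟩
  rw [exponent, hw, div_le_iff₀ (by exact_mod_cast hpos)] at hexp
  have hle' : (minPer w : ℝ) ≤ q := by exact_mod_cast hle
  push_cast at hexp
  linarith

section Squares

variable {u : ℕ → Fin 2}

theorem NoOverlap.ne_of_eq (hu : NoOverlap u) {i : ℕ} (h : u i = u (i + 1)) :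
    u (i + 1) ≠ u (i + 2) := by
  intro h'
  obtain ⟨j, hj, hne⟩ := hu i 1 one_pos
  interval_cases j
  · exact hne h
  · exact hne h'

theorem NoOverlap.exists_square (hu : NoOverlap u) (i : ℕ) :
    ∃ s < 4, u (i + s) = u (i + s + 1) := by
  by_contra! h
  obtain ⟨j, hj, hne⟩ := hu i 2 two_pos
  exact hne (fin_two_eq_of_ne_of_ne (h j (by omega)) (h (j + 1) (by omega)))

theorem NoOverlap.lt_six_of_forall_ne (hu : NoOverlap u) {i n : ℕ}
    (h : ∀ s, 1 ≤ s → s + 1 < n → u (i + s) ≠ u (i + s + 1)) : n < 6 := by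
  obtain ⟨s, hs, hsq⟩ := hu.exists_square (i + 1)
  by_contra! hn
  exact h (s + 1) (by omega) (by omega) (by rwa [← add_assoc, add_right_comm])

theorem NoOverlap.even_of_consecutive_squares (hu : NoOverlap u) {p d : ℕ} (hp : 1 ≤ p)
    (h : u p = u (p + 1)) (h' : u (p + d) = u (p + d + 1))
    (hgap : ∀ s, p < s → s < p + d → u s ≠ u (s + 1)) : Even d := by
  by_contra hodd
  obtain ⟨P, rfl⟩ : ∃ P, p = P + 1 := ⟨p - 1, by omega⟩
  rcases (by rw [Nat.not_even_iff_odd] at hodd; obtain ⟨c, hc⟩ := hodd; omega :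
    d = 1 ∨ d = 3 ∨ 5 ≤ d) with rfl | rfl | hd
  · exact hu.ne_of_eq h h'
  · -- the overlap `ā a a ā a a ā` of period 3
    have key : ∀ a₀ a₁ a₂ a₃ a₄ a₅ a₆ : Fin 2, a₀ ≠ a₁ → a₁ = a₂ → a₂ ≠ a₃ → a₃ ≠ a₄ →
        a₄ = a₅ → a₅ ≠ a₆ → a₀ = a₃ ∧ a₁ = a₄ ∧ a₂ = a₅ ∧ a₃ = a₆ := by decide
    obtain ⟨e₀, e₁, e₂, e₃⟩ := key _ _ _ _ _ _ _ (fun h₀ => hu.ne_of_eq h₀ h) h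
      (hgap (P + 2) (by omega) (by omega)) (hgap (P + 3) (by omega) (by omega)) h'
      (hu.ne_of_eq h')
    obtain ⟨j, hj, hne⟩ := hu P 3 three_pos
    interval_cases j
    · exact hne e₀
    · exact hne e₁
    · exact hne e₂
    · exact hne e₃
  · obtain ⟨s, hs, hsq⟩ := hu.exists_square (P + 2)
    exact hgap (P + 2 + s) (by omega) (by omega) hsq

theorem NoOverlap.even_of_squares (hu : NoOverlap u) {p d : ℕ} (hp : 1 ≤ p)
    (h : u p = u (p + 1)) (h' : u (p + d) = u (p + d + 1)) : Even d := by
  induction d using Nat.strong_induction_on generalizing p with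
  | _ d ih =>
    by_cases hmid : ∃ s, p < s ∧ s < p + d ∧ u s = u (s + 1)
    · obtain ⟨s, hps, hsd, hs⟩ := hmid
      have e₁ := ih (s - p) (by omega) hp h (by rwa [Nat.add_sub_cancel' hps.le])
      have e₂ := ih (p + d - s) (by omega) (by omega) hs
        (by rwa [Nat.add_sub_cancel' hsd.le])
      rw [show d = s - p + (p + d - s) by omega]
      exact e₁.add e₂
    · push Not at hmid
      exact hu.even_of_consecutive_squares hp h h' hmid

theorem NoOverlap.mod_two_eq_of_squares (hu : NoOverlap u) {p p' : ℕ} (hp : 1 ≤ p)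
    (hp' : 1 ≤ p') (h : u p = u (p + 1)) (h' : u p' = u (p' + 1)) : p % 2 = p' % 2 := by
  wlog hle : p ≤ p' generalizing p p'
  · exact (this hp' hp h' h (by omega)).symm
  obtain ⟨d, rfl⟩ := Nat.exists_eq_add_of_le hle
  obtain ⟨c, rfl⟩ := hu.even_of_squares hp h h'
  omega

end Squares

/-- The suffix of `u` from position `r` on is `μ (muPreimage u r)`. -/
def IsMuImageFrom (u : ℕ → Fin 2) (r : ℕ) : Prop :=
  ∀ m, u (r + 2 * m + 1) = u (r + 2 * m) + 1

def muPreimage (u : ℕ → Fin 2) (r : ℕ) : ℕ → Fin 2 := fun m => u (r + 2 * m)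

section MuBlocks

variable {u : ℕ → Fin 2} {r : ℕ}

theorem IsMuImageFrom.apply_add_one (hr : IsMuImageFrom u r) {a : ℕ} (ha : r ≤ a)
    (hpa : a % 2 = r % 2) : u (a + 1) = u a + 1 := by
  obtain ⟨m, rfl⟩ : ∃ m, a = r + 2 * m := ⟨(a - r) / 2, by omega⟩
  exact hr m

theorem IsMuImageFrom.mod_two_eq_of_ne (hr : IsMuImageFrom u r) {a b : ℕ} (ha : r < a)
    (hb : r < b) (hab : a % 2 = b % 2) (heq : u (a - 1) = u (b - 1)) (hne : u a ≠ u b) :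
    a % 2 = r % 2 := by
  by_contra h
  apply hne
  rw [show a = a - 1 + 1 by omega, show b = b - 1 + 1 by omega,
    hr.apply_add_one (by omega) (by omega), hr.apply_add_one (by omega) (by omega), heq]

theorem NoOverlap.exists_isMuImageFrom (hu : NoOverlap u) :
    ∃ r ≤ 2, IsMuImageFrom u r ∧ (r = 2 → u 0 = u 1) ∧
      ∀ p, 1 ≤ p → u p = u (p + 1) → (p + r) % 2 = 1 := by
  obtain ⟨s, -, hs⟩ := hu.exists_square 1
  have hpar : ∀ p, 1 ≤ p → u p = u (p + 1) → p % 2 = (1 + s) % 2 :=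
    fun p hp h => hu.mod_two_eq_of_squares hp (by omega) h hs
  -- blocks start at the positions of parity opposite to that of the squares
  have blocks : ∀ r, (r + 1 + s) % 2 = 1 → (r = 0 → u 0 ≠ u 1) →
      IsMuImageFrom u r ∧ ∀ p, 1 ≤ p → u p = u (p + 1) → (p + r) % 2 = 1 := by
    refine fun r hr h₀ => ⟨fun m => fin_two_eq_add_one_of_ne fun hsq => ?_,
      fun p hp h => by have := hpar p hp h; omega⟩
    rcases Nat.eq_zero_or_pos (r + 2 * m) with h0 | hpos
    · obtain ⟨rfl, rfl⟩ : r = 0 ∧ m = 0 := by omega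
      exact h₀ rfl hsq
    · have := hpar _ hpos hsq
      omega
  rcases Nat.mod_two_eq_zero_or_one (1 + s) with hs2 | hs2
  · obtain ⟨hr, hsq⟩ := blocks 1 (by omega) (by omega)
    exact ⟨1, by norm_num, hr, by omega, hsq⟩
  · by_cases h01 : u 0 = u 1
    · obtain ⟨hr, hsq⟩ := blocks 2 (by omega) (by omega)
      exact ⟨2, le_rfl, hr, fun _ => h01, hsq⟩
    · obtain ⟨hr, hsq⟩ := blocks 0 (by omega) fun _ => h01
      exact ⟨0, by norm_num, hr, by omega, hsq⟩

theorem IsMuImageFrom.noOverlap_muPreimage (hr : IsMuImageFrom u r) (hu : NoOverlap u) :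
    NoOverlap (muPreimage u r) := by
  intro i q hq
  by_contra! h
  obtain ⟨j, hj, hne⟩ := hu (r + 2 * i) (2 * q) (by omega)
  obtain ⟨a, rfl | rfl⟩ := Nat.even_or_odd' j
  · have := h a (by omega)
    simp only [muPreimage] at this
    exact hne (by convert this using 2 <;> ring)
  · have := h a (by omega)
    simp only [muPreimage] at this
    refine hne ?_
    rw [show r + 2 * i + (2 * a + 1) = r + 2 * (i + a) + 1 by ring, hr,
      show r + 2 * (i + a) + 1 + 2 * q = r + 2 * (i + a + q) + 1 by ring, hr, this]

theorem IsMuImageFrom.muPreimage_eq (hr : IsMuImageFrom u r) {k₀ k₁ : ℕ}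
    (h : u (r + 2 * k₀ + 1) = u (r + 2 * k₁ + 1)) : muPreimage u r k₀ = muPreimage u r k₁ := by
  rw [hr, hr] at h
  exact add_right_cancel h

end MuBlocks

theorem thueMorse_two_mul (n : ℕ) : thueMorse (2 * n) = thueMorse n := by
  rcases Nat.eq_zero_or_pos n with rfl | hn
  · rfl
  · simp [thueMorse, Nat.digits_def' one_lt_two (by omega : 0 < 2 * n)]

theorem thueMorse_two_mul_add_one (n : ℕ) : thueMorse (2 * n + 1) = thueMorse n + 1 := by
  rw [thueMorse, thueMorse, Nat.digits_def' one_lt_two (Nat.succ_pos _),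
    show (2 * n + 1) % 2 = 1 by omega, show (2 * n + 1) / 2 = n by omega, List.count_cons_self]
  ext
  simp only [Fin.val_add, Fin.val_natCast, Fin.val_one]
  omega

def TMFactorAt (u : ℕ → Fin 2) (i n : ℕ) : Prop :=
  ∃ p, ∀ m < n, thueMorse (p + m) = u (i + m)

section TMFactorAt

variable {u : ℕ → Fin 2} {i n : ℕ}

theorem TMFactorAt.mono (h : TMFactorAt u i n) {i' n' : ℕ} (hi : i ≤ i')
    (hn : i' + n' ≤ i + n) : TMFactorAt u i' n' := by
  obtain ⟨p, hp⟩ := h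
  refine ⟨p + (i' - i), fun m hm => ?_⟩
  rw [add_assoc, hp _ (by omega), show i + (i' - i + m) = i' + m by omega]

theorem TMFactorAt.congr (h : TMFactorAt u i n) {v : ℕ → Fin 2} {j : ℕ}
    (huv : ∀ m < n, u (i + m) = v (j + m)) : TMFactorAt v j n :=
  let ⟨p, hp⟩ := h
  ⟨p, fun m hm => (hp m hm).trans (huv m hm)⟩

theorem TMFactorAt.of_muPreimage {r k q : ℕ} (hr : IsMuImageFrom u r)
    (h : TMFactorAt (muPreimage u r) k q) : TMFactorAt u (r + 2 * k) (2 * q) := by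
  obtain ⟨p, hp⟩ := h
  refine ⟨2 * p, fun m hm => ?_⟩
  obtain ⟨a, rfl | rfl⟩ := Nat.even_or_odd' m
  · rw [← mul_add, thueMorse_two_mul, hp a (by omega), muPreimage, mul_add, add_assoc]
  · rw [← add_assoc, ← mul_add, thueMorse_two_mul_add_one, hp a (by omega), muPreimage,
      ← hr, mul_add, ← add_assoc, add_assoc (r + 2 * k)]

end TMFactorAt

def NoOverlapBelow (f : ℕ → Fin 2) (N : ℕ) : Prop :=
  ∀ i < N, ∀ q < N, 0 < q → i + 2 * q < N → ∃ j < q + 1, f (i + j) ≠ f (i + j + q)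

instance (f : ℕ → Fin 2) (N : ℕ) : Decidable (NoOverlapBelow f N) := by
  unfold NoOverlapBelow
  infer_instance

theorem NoOverlap.noOverlapBelow {u f : ℕ → Fin 2} {i N : ℕ} (hu : NoOverlap u)
    (h : ∀ m < N, f m = u (i + m)) : NoOverlapBelow f N := by
  intro a _ q _ hq haq
  obtain ⟨j, hj, hne⟩ := hu (i + a) q hq
  refine ⟨j, by omega, ?_⟩
  rwa [h _ (by omega), h _ (by omega), ← add_assoc, ← add_assoc, ← add_assoc]

def constExtend {n : ℕ} (g : Fin n → Fin 2) (x : Fin 2) : ℕ → Fin 2 :=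
  fun m => if h : m < n then g ⟨m, h⟩ else x

theorem constExtend_eq {n : ℕ} {g : Fin n → Fin 2} {f : ℕ → Fin 2} (h : ∀ m : Fin n, g m = f m)
    {m : ℕ} (hm : m < n + 1) : constExtend g (f n) m = f m := by
  unfold constExtend
  split_ifs with hmn
  · exact h ⟨m, hmn⟩
  · rw [show m = n by omega]

set_option synthInstance.maxSize 1000 in
theorem exists_thueMorse_of_short_special : ∀ n < 6, ∀ g : Fin n → Fin 2, ∀ c d : Fin 2, c ≠ d →
    NoOverlapBelow (constExtend g c) (n + 1) → NoOverlapBelow (constExtend g d) (n + 1) →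
    ∃ p < 40, ∀ m : Fin n, thueMorse (p + m) = g m := by
  decide

set_option synthInstance.maxSize 1000 in
theorem exists_thueMorse_of_short_special_prefix : ∀ n < 6, ∀ g : Fin (n + 1) → Fin 2,
    ∀ c d : Fin 2, c ≠ d →
    (∀ s < n, 0 < s → s + 1 < n →
      constExtend (fun m : Fin n => g m.succ) c s ≠
        constExtend (fun m : Fin n => g m.succ) c (s + 1)) →
    NoOverlapBelow (constExtend (fun m : Fin n => g m.succ) c) (n + 1) →
    NoOverlapBelow (constExtend g d) (n + 2) →
    ∃ p < 40, ∀ m : Fin (n + 1), thueMorse (p + m) = g m := by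
  decide

def SpecialFactorsAreTM (n : ℕ) : Prop :=
  ∀ u : ℕ → Fin 2, NoOverlap u → ∀ i₀ i₁, (∀ m < n, u (i₀ + m) = u (i₁ + m)) →
    u (i₀ + n) ≠ u (i₁ + n) → TMFactorAt u i₀ n

/-- A special prefix has no left extension inside `u`, so desubstituting it loses a letter;
this companion statement, proved simultaneously, supplies the left extension `u j` of its
other occurrence. -/
def SpecialPrefixesAreTM (n : ℕ) : Prop :=
  ∀ u : ℕ → Fin 2, NoOverlap u → ∀ j, (∀ m < n, u m = u (j + 1 + m)) →
    u n ≠ u (j + 1 + n) → TMFactorAt u j (n + 1)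

theorem tmFactorAt_of_special_of_forall_ne {n : ℕ} {u : ℕ → Fin 2} (hu : NoOverlap u)
    {i₀ i₁ : ℕ} (hagree : ∀ m < n, u (i₀ + m) = u (i₁ + m)) (hne : u (i₀ + n) ≠ u (i₁ + n))
    (hsq : ∀ s, 1 ≤ s → s + 1 < n → u (i₀ + s) ≠ u (i₀ + s + 1)) : TMFactorAt u i₀ n := by
  obtain ⟨p, -, hp⟩ := exists_thueMorse_of_short_special n (hu.lt_six_of_forall_ne hsq)
    (fun m => u (i₀ + m)) _ _ hne
    (hu.noOverlapBelow fun m hm => constExtend_eq (f := fun m => u (i₀ + m)) (fun _ => rfl) hm)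
    (hu.noOverlapBelow fun m hm =>
      constExtend_eq (f := fun m => u (i₁ + m)) (fun m => hagree m m.2) hm)
  exact ⟨p, fun m hm => hp ⟨m, hm⟩⟩

theorem tmFactorAt_of_special_prefix_of_forall_ne {n : ℕ} {u : ℕ → Fin 2} (hu : NoOverlap u)
    {j : ℕ} (hagree : ∀ m < n, u m = u (j + 1 + m)) (hne : u n ≠ u (j + 1 + n))
    (hsq : ∀ s, 1 ≤ s → s + 1 < n → u s ≠ u (s + 1)) : TMFactorAt u j (n + 1) := by
  have htail : ∀ m : Fin n, u (j + m.succ) = u m := fun m => by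
    rw [Fin.val_succ, hagree m m.2]
    congr 1
    omega
  obtain ⟨p, -, hp⟩ := exists_thueMorse_of_short_special_prefix n
    (hu.lt_six_of_forall_ne (i := 0) (by simpa using hsq)) (fun m => u (j + m)) _ _ hne
    (fun s _ h₁ h₂ => by
      rw [constExtend_eq htail (by omega), constExtend_eq htail (by omega)]
      exact hsq s h₁ h₂)
    (hu.noOverlapBelow (i := 0) fun m hm => by rw [constExtend_eq htail hm, zero_add])
    (hu.noOverlapBelow fun m hm => by
      rw [show j + 1 + n = j + (n + 1) by ring]
      exact constExtend_eq (f := fun m => u (j + m)) (fun _ => rfl) hm)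
  exact ⟨p, fun m hm => hp ⟨m, hm⟩⟩

section Desubstitution

variable {u : ℕ → Fin 2} {r q : ℕ}

theorem tmFactorAt_of_aligned_special (hu : NoOverlap u) (hr : IsMuImageFrom u r)
    (hq : SpecialFactorsAreTM q) {a₀ a₁ : ℕ} (h₀ : r ≤ a₀) (h₁ : r ≤ a₁)
    (hp₀ : a₀ % 2 = r % 2) (hp₁ : a₁ % 2 = r % 2)
    (hagree : ∀ m < q, u (a₀ + 2 * m + 1) = u (a₁ + 2 * m + 1))
    (hne : u (a₀ + 2 * q) ≠ u (a₁ + 2 * q)) : TMFactorAt u a₀ (2 * q) := by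
  obtain ⟨k₀, rfl⟩ : ∃ k, a₀ = r + 2 * k := ⟨(a₀ - r) / 2, by omega⟩
  obtain ⟨k₁, rfl⟩ : ∃ k, a₁ = r + 2 * k := ⟨(a₁ - r) / 2, by omega⟩
  refine (hq _ (hr.noOverlap_muPreimage hu) k₀ k₁ (fun m hm => hr.muPreimage_eq ?_)
    ?_).of_muPreimage hr
  · simpa only [mul_add, add_assoc] using hagree m hm
  · simpa only [muPreimage, mul_add, add_assoc] using hne

theorem tmFactorAt_of_aligned_special_prefix (hu : NoOverlap u) (hr : IsMuImageFrom u r)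
    (hq : SpecialPrefixesAreTM q) {a : ℕ} (ha : r + 2 ≤ a) (hpa : a % 2 = r % 2)
    (hagree : ∀ m < q, u (r + 2 * m + 1) = u (a + 2 * m + 1))
    (hne : u (r + 2 * q) ≠ u (a + 2 * q)) : TMFactorAt u (a - 2) (2 * q + 2) := by
  obtain ⟨k, rfl⟩ : ∃ k, a = r + 2 * (k + 1) := ⟨(a - r) / 2 - 1, by omega⟩
  have := (hq _ (hr.noOverlap_muPreimage hu) k (fun m hm => hr.muPreimage_eq ?_)
    ?_).of_muPreimage hr
  · convert this using 2 <;> omega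
  · convert hagree m hm using 3
    ring
  · simp only [muPreimage]
    convert hne using 2
    ring

end Desubstitution

theorem tmFactorAt_of_special_of_square {n : ℕ}
    (ih : ∀ q < n, SpecialFactorsAreTM q ∧ SpecialPrefixesAreTM q) {u : ℕ → Fin 2}
    (hu : NoOverlap u) {i₀ i₁ : ℕ} (hi : i₀ < i₁)
    (hagree : ∀ m < n, u (i₀ + m) = u (i₁ + m)) (hne : u (i₀ + n) ≠ u (i₁ + n))
    {s : ℕ} (hs : 1 ≤ s) (hsn : s + 1 < n) (hsq : u (i₀ + s) = u (i₀ + s + 1)) :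
    TMFactorAt u i₀ n := by
  obtain ⟨r, hr2, hr, hr0, hpar⟩ := hu.exists_isMuImageFrom
  have hpar₀ := hpar _ (by omega) hsq
  have hpar₁ := hpar (i₁ + s) (by omega)
    ((hagree s (by omega)).symm.trans (hsq.trans (hagree (s + 1) hsn)))
  have hend := hr.mod_two_eq_of_ne (a := i₀ + n) (b := i₁ + n) (by omega) (by omega) (by omega)
    (by convert hagree (n - 1) (by omega) using 2 <;> omega) hne
  rcases (by omega : r ≤ i₀ ∨ i₀ + 1 = r ∨ (i₀ = 0 ∧ r = 2)) with h | h | ⟨rfl, rfl⟩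
  · -- move both occurrences left to the start of their blocks
    obtain ⟨d, hd⟩ : ∃ d, d = (i₀ + r) % 2 := ⟨_, rfl⟩
    obtain ⟨q, hq⟩ : ∃ q, n + d = 2 * q := ⟨(n + d) / 2, by omega⟩
    have := tmFactorAt_of_aligned_special hu hr (ih q (by omega)).1 (a₀ := i₀ - d)
      (a₁ := i₁ - d) (by omega) (by omega) (by omega) (by omega)
      (fun m hm => by convert hagree (2 * m + 1 - d) (by omega) using 2 <;> omega)
      (by convert hne using 2 <;> omega)
    exact this.mono (by omega) (by omega)
  · -- `u i₀` is the last letter before the blocks, so only the occurrence at `i₁` extends left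
    obtain ⟨q, rfl⟩ : ∃ q, n = 2 * q + 1 := ⟨n / 2, by omega⟩
    have := tmFactorAt_of_aligned_special_prefix hu hr (ih q (by omega)).2 (a := i₁ + 1)
      (by omega) (by omega)
      (fun m hm => by convert hagree (2 * m + 2) (by omega) using 2 <;> omega)
      (by convert hne using 2 <;> omega)
    exact (this.mono (by omega) (by omega)).congr fun m hm => (hagree m hm).symm
  · -- the square `u 0 = u 1` would reappear at the even position `i₁`
    have := hpar i₁ (by omega)
      ((hagree 0 (by omega)).symm.trans ((hr0 rfl).trans (hagree 1 (by omega))))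
    omega

theorem tmFactorAt_of_special_prefix_of_square {n : ℕ}
    (ih : ∀ q < n, SpecialFactorsAreTM q ∧ SpecialPrefixesAreTM q) {u : ℕ → Fin 2}
    (hu : NoOverlap u) {j : ℕ}
    (hagree : ∀ m < n, u m = u (j + 1 + m)) (hne : u n ≠ u (j + 1 + n))
    {s : ℕ} (hs : 1 ≤ s) (hsn : s + 1 < n) (hsq : u s = u (s + 1)) :
    TMFactorAt u j (n + 1) := by
  obtain ⟨r, hr2, hr, hr0, hpar⟩ := hu.exists_isMuImageFrom
  have hpar₀ := hpar s hs hsq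
  have hpar₁ := hpar (j + 1 + s) (by omega)
    ((hagree s (by omega)).symm.trans (hsq.trans (hagree (s + 1) hsn)))
  have hend := hr.mod_two_eq_of_ne (a := n) (b := j + 1 + n) (by omega) (by omega) (by omega)
    (by convert hagree (n - 1) (by omega) using 2; omega) hne
  rcases (by omega : r ≤ 1 ∨ r = 2) with h | rfl
  · obtain ⟨q, hq⟩ : ∃ q, n = 2 * q + r := ⟨n / 2, by omega⟩
    have := tmFactorAt_of_aligned_special_prefix hu hr (ih q (by omega)).2 (a := j + 1 + r)
      (by omega) (by omega)
      (fun m hm => by convert hagree (r + 2 * m + 1) (by omega) using 2; omega)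
      (by convert hne using 2 <;> omega)
    exact this.mono (by omega) (by omega)
  · have := hpar (j + 1) (by omega)
      ((hagree 0 (by omega)).symm.trans ((hr0 rfl).trans (hagree 1 (by omega))))
    omega

theorem specialFactorsAreTM_and_specialPrefixesAreTM (n : ℕ) :
    SpecialFactorsAreTM n ∧ SpecialPrefixesAreTM n := by
  induction n using Nat.strong_induction_on with | _ n ih => ?_
  constructor
  · intro u hu i₀ i₁ hagree hne
    wlog hi : i₀ < i₁ generalizing i₀ i₁
    · have hi' : i₁ < i₀ := lt_of_le_of_ne (not_lt.1 hi) fun h => hne (by rw [h])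
      exact (this i₁ i₀ (fun m hm => (hagree m hm).symm) (Ne.symm hne) hi').congr
        fun m hm => (hagree m hm).symm
    by_cases hsq : ∃ s, 1 ≤ s ∧ s + 1 < n ∧ u (i₀ + s) = u (i₀ + s + 1)
    · obtain ⟨s, hs, hsn, hsq⟩ := hsq
      exact tmFactorAt_of_special_of_square ih hu hi hagree hne hs hsn hsq
    · push Not at hsq
      exact tmFactorAt_of_special_of_forall_ne hu hagree hne hsq
  · intro u hu j hagree hne
    by_cases hsq : ∃ s, 1 ≤ s ∧ s + 1 < n ∧ u s = u (s + 1)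
    · obtain ⟨s, hs, hsn, hsq⟩ := hsq
      exact tmFactorAt_of_special_prefix_of_square ih hu hagree hne hs hsn hsq
    · push Not at hsq
      exact tmFactorAt_of_special_prefix_of_forall_ne hu hagree hne hsq

/-- For an overlap-free infinite binary word `u`, every `u`-special factor
(a factor `v` with both `v0` and `v1` factors of `u`) is a Thue–Morse factor. -/
theorem special_factors_are_TM (u : ℕ → Fin 2) (hu : OverlapFree u)
    (v : List (Fin 2)) (h0 : IsFactor (v ++ [0]) u) (h1 : IsFactor (v ++ [1]) u) :
    IsFactor v thueMorse := by
  obtain ⟨i₀, h₀⟩ := isFactor_iff.1 h0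
  obtain ⟨i₁, h₁⟩ := isFactor_iff.1 h1
  have hv : ∀ m (hm : m < v.length), u (i₀ + m) = v[m] := fun m hm =>
    (h₀ m (by simp; omega)).symm.trans (List.getElem_append_left hm)
  have hagree : ∀ m < v.length, u (i₀ + m) = u (i₁ + m) := fun m hm => by
    rw [hv m hm, ← h₁ m (by simp; omega), List.getElem_append_left hm]
  have hne : u (i₀ + v.length) ≠ u (i₁ + v.length) := by
    rw [← h₀ _ (by simp), ← h₁ _ (by simp)]
    simp
  obtain ⟨p, hp⟩ := (specialFactorsAreTM_and_specialPrefixesAreTM v.length).1 u hu.noOverlap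
    i₀ i₁ hagree hne
  exact isFactor_iff.2 ⟨p, fun m hm => ((hp m hm).trans (hv m hm)).symm⟩
end

section
/- For the twisted Thue–Morse word t′, the number D_{t′}(n) of t′-special factors of length n > 0 is: 4 if 2^{k+1} < n ≤ 3·2^k for some k ≥ 0; 3 if n = 4 or 3·2^k < n ≤ 7·2^{k−1} for some k ≥ 1; and 2 otherwise. -/
open Fin.NatCast in
/-- The twisted Thue–Morse word: `t' n` is the number of 0's, mod 2,
in the binary expansion of `n` (the expansion of 0 being empty). -/
def twistedTM : ℕ → Fin 2 := fun n => ((Nat.digits 2 n).count 0 : Fin 2)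

/-- The number of `u`-special factors of length `n` of a binary word `u`. -/
noncomputable def numSpecial (u : ℕ → Fin 2) (n : ℕ) : ℕ :=
  Set.ncard {v : List (Fin 2) | v.length = n ∧ IsFactor (v ++ [0]) u ∧ IsFactor (v ++ [1]) u}


section factorAt

variable {k : ℕ} (u : ℕ → Fin k)

@[simp]
theorem length_factorAt (i m : ℕ) : (factorAt u i m).length = m := by
  simp [factorAt]

theorem factorAt_add (i m n : ℕ) :
    factorAt u i (m + n) = factorAt u i m ++ factorAt u (i + m) n := by
  simp [factorAt, List.range_add, Nat.add_assoc]

theorem factorAt_succ (i m : ℕ) : factorAt u i (m + 1) = factorAt u i m ++ [u (i + m)] := by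
  rw [factorAt_add]
  simp [factorAt]

theorem factorAt_succ' (i m : ℕ) : factorAt u i (m + 1) = u i :: factorAt u (i + 1) m := by
  rw [Nat.add_comm, factorAt_add]
  simp [factorAt]

theorem take_factorAt {m n : ℕ} (h : n ≤ m) (i : ℕ) :
    (factorAt u i m).take n = factorAt u i n := by
  obtain ⟨l, rfl⟩ := Nat.exists_eq_add_of_le h
  rw [factorAt_add, List.take_left' (length_factorAt u i n)]

theorem factorAt_eq_factorAt_iff {i j m : ℕ} :
    factorAt u i m = factorAt u j m ↔ ∀ l < m, u (i + l) = u (j + l) := by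
  simp [factorAt, List.map_inj_left]

theorem append_singleton_eq_factorAt_iff {v : List (Fin k)} {c : Fin k} {i m : ℕ} :
    v ++ [c] = factorAt u i (m + 1) ↔ v = factorAt u i m ∧ c = u (i + m) := by
  rw [factorAt_succ, List.append_singleton_inj]

end factorAt

theorem Fin.two_add_one_add_one (a : Fin 2) : a + 1 + 1 = a := by
  revert a; decide

theorem Fin.two_eq_add_one_iff_ne (a b : Fin 2) : a = b + 1 ↔ a ≠ b := by
  revert a b; decide

/-- The morphism `μ : 0 ↦ 10, 1 ↦ 01`. -/
def tmSubst : List (Fin 2) → List (Fin 2)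
  | [] => []
  | a :: s => (a + 1) :: a :: tmSubst s

@[simp]
theorem tmSubst_nil : tmSubst [] = [] := rfl

@[simp]
theorem tmSubst_cons (a : Fin 2) (s : List (Fin 2)) :
    tmSubst (a :: s) = (a + 1) :: a :: tmSubst s := rfl

@[simp]
theorem tmSubst_append (x y : List (Fin 2)) : tmSubst (x ++ y) = tmSubst x ++ tmSubst y := by
  induction x with
  | nil => rfl
  | cons a s ih => simp [ih]

@[simp]
theorem length_tmSubst (x : List (Fin 2)) : (tmSubst x).length = 2 * x.length := by
  induction x with
  | nil => rfl
  | cons a s ih =>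
    simp only [tmSubst_cons, List.length_cons, ih]
    ring

theorem tmSubst_injective : Function.Injective tmSubst := by
  intro x
  induction x with
  | nil => intro y h; cases y <;> simp_all
  | cons a s ih =>
    intro y h
    cases y with
    | nil => simp at h
    | cons b t =>
      simp only [tmSubst_cons, List.cons.injEq] at h
      rw [h.2.1, ih h.2.2]

theorem tmSubst_drop_injective {d : ℕ} (hd : d ≤ 1) :
    Function.Injective fun z => (tmSubst z).drop d := by
  obtain rfl | rfl : d = 0 ∨ d = 1 := by omega
  · exact tmSubst_injective
  · rintro (_ | ⟨a, s⟩) (_ | ⟨b, t⟩) h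
    all_goals simp only [tmSubst_nil, tmSubst_cons, List.drop_succ_cons, List.drop_zero,
      List.drop_nil, List.cons.injEq, reduceCtorEq] at h
    · rfl
    · rw [h.1, tmSubst_injective h.2]


theorem twistedTM_two_mul_add_one (q : ℕ) : twistedTM (2 * q + 1) = twistedTM q := by
  rw [twistedTM, Nat.digits_def' (by norm_num) (by omega)]
  simp [twistedTM, show (2 * q + 1) / 2 = q by omega]

open Fin.NatCast in
theorem twistedTM_two_mul {q : ℕ} (hq : q ≠ 0) : twistedTM (2 * q) = twistedTM q + 1 := by
  rw [twistedTM, Nat.digits_def' (by norm_num) (by omega)]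
  simp [twistedTM]

theorem twistedTM_two_mul_add_one_eq {q : ℕ} (hq : q ≠ 0) :
    twistedTM (2 * q + 1) = twistedTM (2 * q) + 1 := by
  rw [twistedTM_two_mul hq, twistedTM_two_mul_add_one, Fin.two_add_one_add_one]

theorem odd_of_twistedTM_eq_succ {m : ℕ} (hm : m ≠ 0) (h : twistedTM m = twistedTM (m + 1)) :
    Odd m := by
  rcases Nat.even_or_odd' m with ⟨q, rfl | rfl⟩
  · rw [twistedTM_two_mul_add_one_eq (by omega)] at h
    simp at h
  · exact odd_two_mul_add_one q

theorem twistedTM_ne_or_ne (s : ℕ) :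
    twistedTM s ≠ twistedTM (s + 1) ∨ twistedTM (s + 1) ≠ twistedTM (s + 2) := by
  rcases Nat.eq_zero_or_pos s with rfl | hs
  · right; decide
  by_contra! h
  have h₁ := odd_of_twistedTM_eq_succ (by omega) h.1
  have h₂ := odd_of_twistedTM_eq_succ (by omega) h.2
  rw [Nat.odd_add_one] at h₂
  exact h₂ h₁

theorem exists_twistedTM_eq_succ (p : ℕ) :
    ∃ i < 4, twistedTM (p + i) = twistedTM (p + i + 1) := by
  set s := p / 2
  obtain ⟨j, hj, h⟩ : ∃ j < 2, twistedTM (s + j) ≠ twistedTM (s + j + 1) := by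
    rcases twistedTM_ne_or_ne s with h | h
    exacts [⟨0, by omega, h⟩, ⟨1, by omega, h⟩]
  refine ⟨2 * (s + j) + 1 - p, by omega, ?_⟩
  rw [show p + (2 * (s + j) + 1 - p) = 2 * (s + j) + 1 by omega,
    show 2 * (s + j) + 1 + 1 = 2 * (s + j + 1) by ring, twistedTM_two_mul_add_one,
    twistedTM_two_mul (by omega), Fin.two_eq_add_one_iff_ne]
  exact h

theorem factorAt_two_mul {q : ℕ} (hq : q ≠ 0) (k : ℕ) :
    factorAt twistedTM (2 * q) (2 * k) = tmSubst (factorAt twistedTM q k) := by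
  induction k with
  | zero => rfl
  | succ k ih =>
    rw [show 2 * (k + 1) = 2 * k + 1 + 1 by ring, factorAt_succ, factorAt_succ, ih,
      factorAt_succ, tmSubst_append, show 2 * q + (2 * k + 1) = 2 * (q + k) + 1 by ring,
      show 2 * q + 2 * k = 2 * (q + k) by ring, twistedTM_two_mul (by omega),
      twistedTM_two_mul_add_one]
    simp

theorem factorAt_two_mul_add_one (q k : ℕ) :
    factorAt twistedTM (2 * q + 1) (2 * k + 1) =
      (tmSubst (factorAt twistedTM q (k + 1))).tail := by
  rw [factorAt_succ', factorAt_succ', show 2 * q + 1 + 1 = 2 * (q + 1) by ring,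
    factorAt_two_mul (by omega), twistedTM_two_mul_add_one]
  simp

theorem factorAt_eq_drop_tmSubst {p : ℕ} (hp : p ≠ 0) (k : ℕ) :
    factorAt twistedTM p (2 * k - p % 2) =
      (tmSubst (factorAt twistedTM (p / 2) k)).drop (p % 2) := by
  obtain ⟨q, d, hd, rfl⟩ : ∃ q d, d < 2 ∧ p = 2 * q + d := ⟨p / 2, p % 2, by omega, by omega⟩
  rw [show (2 * q + d) / 2 = q by omega, show (2 * q + d) % 2 = d by omega]
  obtain rfl | rfl : d = 0 ∨ d = 1 := by omega
  · exact factorAt_two_mul (by omega) k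
  · rcases k with _ | k
    · rfl
    · rw [show 2 * (k + 1) - 1 = 2 * k + 1 by omega, factorAt_two_mul_add_one, List.drop_one]

theorem isFactor_append_singleton_iff {k n : ℕ} {u : ℕ → Fin k} {v : List (Fin k)}
    {c : Fin k} (hv : v.length = n) :
    IsFactor (v ++ [c]) u ↔ ∃ p, v = factorAt u p n ∧ c = u (p + n) := by
  simp only [IsFactor, List.length_append, List.length_singleton, hv,
    append_singleton_eq_factorAt_iff]

theorem eq_twistedTM_of_isFactor_prefix_append {n : ℕ} {c : Fin 2} (hn : 5 ≤ n)
    (h : IsFactor (factorAt twistedTM 0 n ++ [c]) twistedTM) : c = twistedTM n := by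
  obtain ⟨p, hw, rfl⟩ := (isFactor_append_singleton_iff (length_factorAt _ _ _)).1 h
  rcases Nat.eq_zero_or_pos p with rfl | hp
  · rw [Nat.zero_add]
  have hl := (factorAt_eq_factorAt_iff twistedTM).1 hw
  -- `t'` begins `00100`: the squares `00` at positions 0 and 3 cannot both move to odd positions.
  have h₀ : Odd p := odd_of_twistedTM_eq_succ (by omega) <| by
    rw [← Nat.add_zero p, ← hl 0 (by omega), Nat.add_assoc, ← hl 1 (by omega)]; decide
  have h₃ : Odd (p + 3) := odd_of_twistedTM_eq_succ (by omega) <| by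
    rw [← hl 3 (by omega), Nat.add_assoc, ← hl 4 (by omega)]; decide
  rw [Nat.odd_add] at h₃
  exact absurd (h₃.1 h₀) (by decide)

theorem mod_two_eq_of_factorAt_eq {p p' ℓ : ℕ} (hp : p ≠ 0) (hp' : p' ≠ 0) (hℓ : 5 ≤ ℓ)
    (h : factorAt twistedTM p ℓ = factorAt twistedTM p' ℓ) : p % 2 = p' % 2 := by
  obtain ⟨i, hi, he⟩ := exists_twistedTM_eq_succ p
  have hl := (factorAt_eq_factorAt_iff twistedTM).1 h
  have he' : twistedTM (p' + i) = twistedTM (p' + i + 1) := by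
    rw [← hl i (by omega), Nat.add_assoc, ← hl (i + 1) (by omega), ← Nat.add_assoc, he]
  have h₁ := Nat.odd_iff.1 (odd_of_twistedTM_eq_succ (by omega) he)
  have h₂ := Nat.odd_iff.1 (odd_of_twistedTM_eq_succ (by omega) he')
  omega

theorem even_add_of_factorAt_eq {p p' n : ℕ} (hp : p ≠ 0) (hp' : p' ≠ 0) (hn : 5 ≤ n)
    (h : factorAt twistedTM p n = factorAt twistedTM p' n)
    (hne : twistedTM (p + n) ≠ twistedTM (p' + n)) : (p + n) % 2 = 0 := by
  have hpar := mod_two_eq_of_factorAt_eq hp hp' hn h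
  -- Otherwise both next letters complete a `μ`-block, so both complement the same letter.
  by_contra hodd
  have hlast := (factorAt_eq_factorAt_iff twistedTM).1 h (n - 1) (by omega)
  have hsucc (q : ℕ) (hq : (q + n) % 2 = 1) :
      twistedTM (q + n) = twistedTM (q + (n - 1)) + 1 := by
    obtain ⟨r, hr⟩ : ∃ r, q + n = 2 * r + 1 := ⟨(q + n) / 2, by omega⟩
    rw [hr, twistedTM_two_mul_add_one_eq (by omega), show q + (n - 1) = 2 * r by omega]
  exact hne (by rw [hsucc p (by omega), hsucc p' (by omega), hlast])

theorem factorAt_desubst {p n : ℕ} (hp : p ≠ 0) (he : (p + n) % 2 = 0) :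
    factorAt twistedTM p n =
        (tmSubst (factorAt twistedTM (p / 2) ((n + 1) / 2))).drop (n % 2) ∧
      factorAt twistedTM (p / 2) ((n + 1) / 2) ++ [twistedTM (p + n) + 1] =
        factorAt twistedTM (p / 2) ((n + 1) / 2 + 1) := by
  constructor
  · rw [show n % 2 = p % 2 by omega]
    convert factorAt_eq_drop_tmSubst hp ((n + 1) / 2) using 2
    omega
  · rw [factorAt_succ, show p + n = 2 * (p / 2 + (n + 1) / 2) by omega,
      twistedTM_two_mul (by omega), Fin.two_add_one_add_one]

def specialFactors (u : ℕ → Fin 2) (n : ℕ) : Set (List (Fin 2)) :=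
  {v | v.length = n ∧ IsFactor (v ++ [0]) u ∧ IsFactor (v ++ [1]) u}

theorem numSpecial_eq_ncard (u : ℕ → Fin 2) (n : ℕ) :
    numSpecial u n = (specialFactors u n).ncard := rfl

theorem mem_specialFactors_iff {u : ℕ → Fin 2} {n : ℕ} {v : List (Fin 2)} :
    v ∈ specialFactors u n ↔
      v.length = n ∧ ∀ c, IsFactor (v ++ [c]) u := by
  refine ⟨fun ⟨hl, h₀, h₁⟩ => ⟨hl, fun c => ?_⟩, fun ⟨hl, h⟩ => ⟨hl, h 0, h 1⟩⟩
  fin_cases c <;> assumption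

theorem ne_zero_of_special {v : List (Fin 2)} {n p : ℕ} {c : Fin 2} (hn : 5 ≤ n)
    (hv : v = factorAt twistedTM p n) (hc : c = twistedTM (p + n))
    (h : IsFactor (v ++ [c + 1]) twistedTM) : p ≠ 0 := by
  rintro rfl
  subst hv hc
  have := eq_twistedTM_of_isFactor_prefix_append hn h
  rw [Nat.zero_add] at this
  simp at this

theorem specialFactors_twistedTM_subset_image {n : ℕ} (hn : 9 ≤ n) :
    specialFactors twistedTM n ⊆
      (fun z => (tmSubst z).drop (n % 2)) '' specialFactors twistedTM ((n + 1) / 2) := by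
  intro v hv
  obtain ⟨hl, hfac⟩ := mem_specialFactors_iff.1 hv
  choose p hvp hcp using fun c => (isFactor_append_singleton_iff hl).1 (hfac c)
  have hp (c) : p c ≠ 0 := ne_zero_of_special (by omega) (hvp c) (hcp c) (hfac (c + 1))
  have he (c) : (p c + n) % 2 = 0 := by
    refine even_add_of_factorAt_eq (hp c) (hp (c + 1)) (by omega)
      ((hvp c).symm.trans (hvp _)) ?_
    rw [← hcp, ← hcp]
    simp
  have hz (c) : factorAt twistedTM (p c / 2) ((n + 1) / 2) =
      factorAt twistedTM (p 0 / 2) ((n + 1) / 2) :=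
    tmSubst_drop_injective (d := n % 2) (by omega) <| by
      dsimp only
      rw [← (factorAt_desubst (hp c) (he c)).1, ← (factorAt_desubst (hp 0) (he 0)).1,
        ← hvp, ← hvp]
  refine ⟨factorAt twistedTM (p 0 / 2) ((n + 1) / 2),
    mem_specialFactors_iff.2 ⟨length_factorAt _ _ _, fun c => ⟨p (c + 1) / 2, ?_⟩⟩,
    ((hvp 0).trans (factorAt_desubst (hp 0) (he 0)).1).symm⟩
  rw [← hz (c + 1), List.length_append, length_factorAt, List.length_singleton,
    ← (factorAt_desubst (hp _) (he _)).2, ← hcp, Fin.two_add_one_add_one]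

theorem image_subset_specialFactors_twistedTM {n : ℕ} (hn : 9 ≤ n) :
    (fun z => (tmSubst z).drop (n % 2)) '' specialFactors twistedTM ((n + 1) / 2) ⊆
      specialFactors twistedTM n := by
  rintro _ ⟨z, hz, rfl⟩
  obtain ⟨hl, hfac⟩ := mem_specialFactors_iff.1 hz
  rw [mem_specialFactors_iff]
  have hlen : ((tmSubst z).drop (n % 2)).length = n := by
    simp only [List.length_drop, length_tmSubst, hl]
    omega
  refine ⟨hlen, fun c => (isFactor_append_singleton_iff hlen).2 ?_⟩
  obtain ⟨q, hzq, hcq⟩ := (isFactor_append_singleton_iff hl).1 (hfac (c + 1))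
  have hq : q ≠ 0 := ne_zero_of_special (by omega) hzq hcq <| by
    rw [Fin.two_add_one_add_one]; exact hfac c
  have hpq : (2 * q + n % 2) / 2 = q := by omega
  obtain ⟨hdrop, hnext⟩ := factorAt_desubst (p := 2 * q + n % 2) (n := n) (by omega) (by omega)
  rw [hpq, factorAt_succ, List.append_cancel_left_eq, List.singleton_inj, ← hcq] at hnext
  refine ⟨2 * q + n % 2, by rw [hdrop, hpq, hzq], ?_⟩
  simpa using hnext.symm

theorem specialFactors_twistedTM_eq_image {n : ℕ} (hn : 9 ≤ n) :
    specialFactors twistedTM n =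
      (fun z => (tmSubst z).drop (n % 2)) '' specialFactors twistedTM ((n + 1) / 2) :=
  (specialFactors_twistedTM_subset_image hn).antisymm (image_subset_specialFactors_twistedTM hn)

theorem numSpecial_twistedTM_eq_half {n : ℕ} (hn : 9 ≤ n) :
    numSpecial twistedTM n = numSpecial twistedTM ((n + 1) / 2) := by
  rw [numSpecial_eq_ncard, numSpecial_eq_ncard, specialFactors_twistedTM_eq_image hn,
    Set.ncard_image_of_injective _ (tmSubst_drop_injective (by omega))]

theorem exists_factorAt_eq_lt (j : ℕ) {ℓ p : ℕ} (hℓ : ℓ ≤ 2 ^ j + 1) (hp : p ≠ 0) :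
    ∃ p', p' ≠ 0 ∧ p' < 6 * 2 ^ j ∧ factorAt twistedTM p' ℓ = factorAt twistedTM p ℓ := by
  induction j generalizing ℓ p with
  | zero =>
    have hsmall :
        ∀ a b : Fin 2, ∃ p' < 6, p' ≠ 0 ∧ twistedTM p' = a ∧ twistedTM (p' + 1) = b := by
      decide
    obtain ⟨p', hlt, hp', ha, hb⟩ := hsmall (twistedTM p) (twistedTM (p + 1))
    refine ⟨p', hp', by simpa using hlt, (factorAt_eq_factorAt_iff twistedTM).2 fun l hl => ?_⟩
    obtain rfl | rfl : l = 0 ∨ l = 1 := by simp at hℓ; omega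
    exacts [ha, hb]
  | succ j ih =>
    rw [pow_succ] at hℓ ⊢
    have h2j : 0 < 2 ^ j := by positivity
    by_cases hlt : p < 6 * (2 ^ j * 2)
    · exact ⟨p, hp, hlt, rfl⟩
    obtain ⟨q', hq', hlt', hq⟩ := ih (ℓ := 2 ^ j + 1) (p := p / 2) le_rfl (by omega)
    have hwin {r : ℕ} (hr : r ≠ 0) : factorAt twistedTM r ℓ =
        ((tmSubst (factorAt twistedTM (r / 2) (2 ^ j + 1))).drop (r % 2)).take ℓ := by
      rw [← factorAt_eq_drop_tmSubst hr, take_factorAt _ (by omega)]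
    refine ⟨2 * q' + p % 2, by omega, by omega, ?_⟩
    rw [hwin (by omega), hwin hp, show (2 * q' + p % 2) / 2 = q' by omega,
      show (2 * q' + p % 2) % 2 = p % 2 by omega, hq]

theorem isFactor_twistedTM_iff_exists_lt {ℓ : ℕ} (hℓ : ℓ ≤ 9) {v : List (Fin 2)}
    (hv : v.length = ℓ) : IsFactor v twistedTM ↔ ∃ p < 48, v = factorAt twistedTM p ℓ := by
  refine ⟨fun ⟨p, hp⟩ => ?_, fun ⟨p, _, hp⟩ => ⟨p, hv ▸ hp⟩⟩
  rw [hv] at hp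
  rcases eq_or_ne p 0 with rfl | hp0
  · exact ⟨0, by norm_num, hp⟩
  obtain ⟨p', -, hlt, heq⟩ := exists_factorAt_eq_lt 3 (by norm_num; omega) hp0
  exact ⟨p', by norm_num at hlt; exact hlt, hp.trans heq.symm⟩

def specialBefore (u : ℕ → Fin 2) (n K : ℕ) : Finset (List (Fin 2)) :=
  ((Finset.range K).image fun p => factorAt u p n).filter fun v =>
    (∃ p < K, v ++ [0] = factorAt u p (n + 1)) ∧ ∃ p < K, v ++ [1] = factorAt u p (n + 1)

theorem specialFactors_twistedTM_eq_specialBefore {n : ℕ} (hn : n ≤ 8) :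
    specialFactors twistedTM n = specialBefore twistedTM n 48 := by
  ext v
  simp only [specialFactors, specialBefore, Finset.coe_filter, Finset.mem_image,
    Finset.mem_range, Set.mem_ofPred_eq]
  constructor
  · rintro ⟨hl, h₀, h₁⟩
    rw [isFactor_twistedTM_iff_exists_lt (ℓ := n + 1) (by omega) (by simp [hl])] at h₀ h₁
    obtain ⟨p, hp, hvp⟩ := h₀
    refine ⟨⟨p, hp, ((append_singleton_eq_factorAt_iff _).1 hvp).1.symm⟩, ⟨p, hp, hvp⟩, h₁⟩
  · rintro ⟨⟨p, -, rfl⟩, h₀, h₁⟩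
    refine ⟨length_factorAt _ _ _, ?_, ?_⟩
    all_goals rw [isFactor_twistedTM_iff_exists_lt (ℓ := n + 1) (by omega) (by simp)]
    exacts [h₀, h₁]

theorem exists_mul_two_pow_iff_exists_lt {a b n : ℕ} (ha : 0 < a) :
    (∃ k, a * 2 ^ k < n ∧ n ≤ b * 2 ^ k) ↔ ∃ k < n, a * 2 ^ k < n ∧ n ≤ b * 2 ^ k := by
  refine ⟨fun ⟨k, h⟩ => ⟨k, ?_, h⟩, fun ⟨k, _, h⟩ => ⟨k, h⟩⟩
  have : k < 2 ^ k := Nat.lt_two_pow_self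
  nlinarith [h.1]

theorem exists_mul_two_pow_iff_half {a b n : ℕ} (hn : b < n) :
    (∃ k, a * 2 ^ k < n ∧ n ≤ b * 2 ^ k) ↔
      ∃ k, a * 2 ^ k < (n + 1) / 2 ∧ (n + 1) / 2 ≤ b * 2 ^ k := by
  constructor
  · rintro ⟨_ | k, h⟩
    · omega
    · have : a * 2 ^ (k + 1) = 2 * (a * 2 ^ k) ∧ b * 2 ^ (k + 1) = 2 * (b * 2 ^ k) := by
        constructor <;> ring
      exact ⟨k, by omega⟩
  · rintro ⟨k, h⟩
    have : a * 2 ^ (k + 1) = 2 * (a * 2 ^ k) ∧ b * 2 ^ (k + 1) = 2 * (b * 2 ^ k) := by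
      constructor <;> ring
    exact ⟨k + 1, by omega⟩

/-- The right-hand side of `twistedTM_special_count`, with `k` bounded to make it decidable. -/
def specialCount (n : ℕ) : ℕ :=
  if ∃ k < n, 2 * 2 ^ k < n ∧ n ≤ 3 * 2 ^ k then 4
  else if n = 4 ∨ ∃ k < n, 6 * 2 ^ k < n ∧ n ≤ 7 * 2 ^ k then 3
  else 2

theorem specialCount_half {n : ℕ} (hn : 9 ≤ n) :
    specialCount n = specialCount ((n + 1) / 2) := by
  classical
  simp only [specialCount, ← exists_mul_two_pow_iff_exists_lt two_pos,
    ← exists_mul_two_pow_iff_exists_lt (show 0 < 6 by norm_num),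
    exists_mul_two_pow_iff_half (show 3 < n by omega),
    exists_mul_two_pow_iff_half (show 7 < n by omega),
    show n ≠ 4 by omega, show (n + 1) / 2 ≠ 4 by omega, false_or]

theorem numSpecial_twistedTM_eq_specialCount {n : ℕ} (hn : 0 < n) :
    numSpecial twistedTM n = specialCount n := by
  induction n using Nat.strong_induction_on with
  | _ n ih =>
    rcases le_or_gt n 8 with h8 | h9
    · have hbase : ∀ n < 9, 0 < n → (specialBefore twistedTM n 48).card = specialCount n := by
        decide
      rw [numSpecial_eq_ncard, specialFactors_twistedTM_eq_specialBefore h8,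
        Set.ncard_coe_finset, hbase n (by omega) hn]
    · rw [numSpecial_twistedTM_eq_half h9, specialCount_half h9, ih _ (by omega) (by omega)]

open scoped Classical in
/-- The number of special factors of the twisted Thue–Morse word of each length `n > 0`. -/
theorem twistedTM_special_count (n : ℕ) (hn : 0 < n) :
    numSpecial twistedTM n =
      if ∃ k : ℕ, 2 ^ (k + 1) < n ∧ n ≤ 3 * 2 ^ k then 4
      else if n = 4 ∨ ∃ k : ℕ, 3 * 2 ^ (k + 1) < n ∧ n ≤ 7 * 2 ^ k then 3
      else 2 := by
  rw [numSpecial_twistedTM_eq_specialCount hn, specialCount]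
  simp only [pow_succ', ← mul_assoc, Nat.reduceMul, exists_mul_two_pow_iff_exists_lt two_pos,
    exists_mul_two_pow_iff_exists_lt (show 0 < 6 by norm_num)]
end
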